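/- Let δ be Bernoulli with Pr(δ = 1 | x, y) = π(x, y) ∈ (0,1), and let f1(y|x) denote the conditional density of Y given X = x and δ = 1. Then the conditional density of Y given X = x and δ = 0 equals f1(y|x) O(x, y) / E[ O(x, Y) | X = x, δ = 1 ], where O(x, y) = (1 - π(x, y))/π(x, y), provided the denominator is finite and positive. -/

import Mathlib

open MeasureTheory

/-! Integrating the odds against the respondent density `π f / p₁` cancels `π` and leaves
`∫ (1 - π) f / p₁ = p₀ / p₁`; so the normalising constant `D` is `p₀ / p₁`, and
`f₁ O / D = ((1 - π) f / p₁) / (p₀ / p₁) = (1 - π) f / p₀`, which is Bayes' rule for `δ = 0`. -/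

lemma odds_mul_respondent_density {π f p₁ : ℝ} (hπ : π ≠ 0) :
    (1 - π) / π * (π * f / p₁) = (1 - π) * f / p₁ := by
  field_simp

lemma integral_odds_mul_respondent_density {α : Type*} [MeasurableSpace α] (ν : Measure α)
    {π f : α → ℝ} (p₁ : ℝ) (hπ : ∀ y, π y ≠ 0) :
    ∫ y, (1 - π y) / π y * (π y * f y / p₁) ∂ν = (∫ y, (1 - π y) * f y ∂ν) / p₁ := by
  simp_rw [odds_mul_respondent_density (hπ _)]
  exact integral_div p₁ _

theorem nonrespondent_density_identity_general
    (ν : Measure ℝ) (f π f1 f0 O : ℝ → ℝ) (p1 p0 D : ℝ)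
    (hπ : ∀ y, 0 < π y ∧ π y < 1)
    (hp0 : p0 = ∫ y, (1 - π y) * f y ∂ν)
    (hf1 : ∀ y, f1 y = π y * f y / p1)
    (hf0 : ∀ y, f0 y = (1 - π y) * f y / p0)
    (hO : ∀ y, O y = (1 - π y) / π y)
    (hD : D = ∫ y, O y * f1 y ∂ν) (hDpos : 0 < D) :
    ∀ y, f0 y = f1 y * O y / D := by
  have hπ_ne : ∀ y, π y ≠ 0 := fun y => (hπ y).1.ne'
  have hD_eq : D = p0 / p1 := by
    simp only [hD, hO, hf1, hp0, integral_odds_mul_respondent_density ν p1 hπ_ne]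
  obtain ⟨hp0_ne, hp1_ne⟩ := div_ne_zero_iff.mp (hD_eq ▸ hDpos.ne')
  intro y
  rw [hf0, hf1, hO, hD_eq]
  field_simp [hπ_ne y]

/-- Nonrespondent prediction model identity. Fix `X = x`. Let `f` be the conditional
density of `Y` (given `X = x`) w.r.t. a dominating measure `ν`, `π y ∈ (0,1)` the
response probability, `p1 = P(δ=1)`, `p0 = P(δ=0)`, and let
`f1 y = π y · f y / p1` and `f0 y = (1 - π y) · f y / p0` be the conditional densities
of `Y` given `δ = 1` and `δ = 0` respectively. With odds `O y = (1 - π y)/π y` and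
`D = E[O(Y) | δ = 1] = ∫ O y · f1 y dν` finite and positive, the density of `Y` given
`δ = 0` equals `f1 y · O y / D`. -/
theorem nonrespondent_density_identity
    (ν : Measure ℝ) (f π f1 f0 O : ℝ → ℝ) (p1 p0 D : ℝ)
    (hf : ∀ y, 0 ≤ f y)
    (hπ : ∀ y, 0 < π y ∧ π y < 1)
    (hp1 : p1 = ∫ y, π y * f y ∂ν) (hp1pos : 0 < p1)
    (hp0 : p0 = ∫ y, (1 - π y) * f y ∂ν) (hp0pos : 0 < p0)
    (hint : Integrable (fun y => (1 - π y) * f y) ν)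
    (hf1 : ∀ y, f1 y = π y * f y / p1)
    (hf0 : ∀ y, f0 y = (1 - π y) * f y / p0)
    (hO : ∀ y, O y = (1 - π y) / π y)
    (hD : D = ∫ y, O y * f1 y ∂ν) (hDpos : 0 < D) :
    ∀ y, f0 y = f1 y * O y / D :=
  nonrespondent_density_identity_general ν f π f1 f0 O p1 p0 D hπ hp0 hf1 hf0 hO hD hDpos
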